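/- Let M be a finite aperiodic monoid and let c ∈ M with c ≠ 1. Then the local divisor M_c is aperiodic. -/

import Mathlib

variable {M : Type*} [Monoid M]

/-- The underlying set `cM ∩ Mc` of the local divisor of `M` at `c`. -/
def LD (M : Type*) [Monoid M] (c : M) : Set M :=
  {z | (∃ y, z = c * y) ∧ (∃ x, z = x * c)}

namespace LD

variable {c : M}

/-- The multiplication `(xc) ∘ (cy) = xcy` of the local divisor at `c`,
defined via a choice of `x` with `z₁ = x * c`. -/
noncomputable def mul (z₁ z₂ : LD M c) : LD M c := by
  refine ⟨z₁.2.2.choose * (z₂ : M), ?_, ?_⟩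
  · obtain ⟨y₁, hy₁⟩ := z₁.2.1
    obtain ⟨y₂, hy₂⟩ := z₂.2.1
    refine ⟨y₁ * y₂, ?_⟩
    calc z₁.2.2.choose * (z₂ : M) = z₁.2.2.choose * (c * y₂) := by rw [← hy₂]
      _ = z₁.2.2.choose * c * y₂ := (mul_assoc _ _ _).symm
      _ = (z₁ : M) * y₂ := by rw [← z₁.2.2.choose_spec]
      _ = c * y₁ * y₂ := by rw [hy₁]
      _ = c * (y₁ * y₂) := mul_assoc _ _ _
  · obtain ⟨x₂, hx₂⟩ := z₂.2.2
    exact ⟨z₁.2.2.choose * x₂, by rw [hx₂, mul_assoc]⟩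

noncomputable instance : Mul (LD M c) := ⟨mul⟩

instance : One (LD M c) := ⟨⟨c, ⟨1, (mul_one c).symm⟩, ⟨1, (one_mul c).symm⟩⟩⟩

@[simp] theorem one_val : ((1 : LD M c) : M) = c := rfl

/-- The multiplication of the local divisor is well defined:
if `z₁ = x * c` then `z₁ ∘ z₂ = x * z₂`. -/
theorem mul_val (z₁ z₂ : LD M c) (x : M) (hx : (z₁ : M) = x * c) :
    ((z₁ * z₂ : LD M c) : M) = x * (z₂ : M) := by
  show z₁.2.2.choose * (z₂ : M) = x * (z₂ : M)
  obtain ⟨y₂, hy₂⟩ := z₂.2.1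
  calc z₁.2.2.choose * (z₂ : M) = z₁.2.2.choose * (c * y₂) := by rw [← hy₂]
    _ = z₁.2.2.choose * c * y₂ := (mul_assoc _ _ _).symm
    _ = x * c * y₂ := by rw [← z₁.2.2.choose_spec, hx]
    _ = x * (c * y₂) := mul_assoc _ _ _
    _ = x * (z₂ : M) := by rw [← hy₂]

/-- The local divisor `M_c = (cM ∩ Mc, ∘, c)` of the monoid `M` at `c`. -/
noncomputable instance monoid : Monoid (LD M c) where
  mul_assoc a b d := by
    obtain ⟨xa, hxa⟩ := a.2.2
    have hab : ((a * b : LD M c) : M) = xa * (b : M) := mul_val a b xa hxa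
    obtain ⟨xb, hxb⟩ := b.2.2
    have hab' : ((a * b : LD M c) : M) = (xa * xb) * c := by rw [hab, hxb, mul_assoc]
    apply Subtype.ext
    rw [mul_val (a * b) d (xa * xb) hab', mul_val a (b * d) xa hxa,
      mul_val b d xb hxb, mul_assoc]
  one_mul a := Subtype.ext <| by
    rw [mul_val 1 a 1 (one_mul c).symm, one_mul]
  mul_one a := Subtype.ext <| by
    obtain ⟨xa, hxa⟩ := a.2.2
    rw [mul_val a 1 xa hxa, one_val, ← hxa]

end LD

/-- A monoid `M` is aperiodic if for every `x ∈ M` there is an `n ∈ ℕ`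
with `x ^ n = x ^ (n + 1)`. -/
def Aperiodic (N : Type*) [Monoid N] : Prop :=
  ∀ x : N, ∃ n : ℕ, x ^ n = x ^ (n + 1)

theorem LD.coe_pow_of_coe_eq_mul {c : M} (z : LD M c) {x : M} (hx : (z : M) = x * c) (n : ℕ) :
    ((z ^ n : LD M c) : M) = x ^ n * c := by
  induction n with
  | zero => simp only [pow_zero, one_mul, LD.one_val]
  | succ n ih => rw [pow_succ', LD.mul_val z _ x hx, ih, ← mul_assoc, ← pow_succ']

theorem localDivisor_aperiodic_general (hM : Aperiodic M) (c : M) :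
    Aperiodic (LD M c) := by
  intro z
  obtain ⟨x, hx⟩ := z.2.2
  obtain ⟨n, hn⟩ := hM x
  exact ⟨n, Subtype.ext <| by
    rw [LD.coe_pow_of_coe_eq_mul z hx, LD.coe_pow_of_coe_eq_mul z hx, hn]⟩

/-- If `M` is a finite aperiodic monoid and `c ≠ 1`, then the local divisor
`M_c = (cM ∩ Mc, ∘, c)` is aperiodic. -/
theorem localDivisor_aperiodic [Finite M] (hM : Aperiodic M) (c : M) (hc : c ≠ 1) :
    Aperiodic (LD M c) :=
  localDivisor_aperiodic_general hM c
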